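/- Let S be the 10×10 complex matrix with rows and columns as in the rank-10 modular data: writing α = 5 + 2√5, β = 9 + 4√5, γ = 8 + 4√5, δ = 14 + 6√5, ε = 6 + 2√5, s = −1 + 2i, the matrix S given explicitly by row 1: (1, α, α, α, α, α, α, 4(2+√5), 4(2+√5), β) row 2: (α, 3α, −α, −α, −α, −α, −α, 0, 0, α) row 3: (α, −α, 3α, −α, −α, −α, −α, 0, 0, α) row 4: (α, −α, −α, sα, s̄α, α, α, 0, 0, α) row 5: (α, −α, −α, s̄α, sα, α, α, 0, 0, α) row 6: (α, −α, −α, α, α, s̄α, sα, 0, 0, α) row 7: (α, −α, −α, α, α, sα, s̄α, 0, 0, α) row 8: (4(2+√5), 0, 0, 0, 0, 0, 0, −2(3+√5), δ, −4(2+√5)) row 9: (4(2+√5), 0, 0, 0, 0, 0, 0, δ, −2(3+√5), −4(2+√5)) row 10: (β, α, α, α, α, α, α, −4(2+√5), −4(2+√5), 1) satisfies S·S̄ = (720 + 320√5)·I₁₀, where S̄ is the entrywise complex conjugate and I₁₀ the 10×10 identity. -/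
import Mathlib


noncomputable section

/-- `α = 5 + 2√5` as a complex number. -/
def α : ℂ := 5 + 2 * Real.sqrt 5
/-- `β = 9 + 4√5`. -/
def β : ℂ := 9 + 4 * Real.sqrt 5
/-- `δ = 14 + 6√5`. -/
def δ : ℂ := 14 + 6 * Real.sqrt 5
/-- `4(2+√5)`. -/
def γ' : ℂ := 4 * (2 + Real.sqrt 5)
/-- `2(3+√5)`. -/
def ε' : ℂ := 2 * (3 + Real.sqrt 5)
/-- `s = -1 + 2i`. -/
def sv : ℂ := -1 + 2 * Complex.I

/-- The S-matrix of the rank-10 modular data `10^{20,676}_{0,1435}`. -/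
def Srank10 : Matrix (Fin 10) (Fin 10) ℂ :=
  Matrix.of
    ![![1, α, α, α, α, α, α, γ', γ', β],
      ![α, 3 * α, -α, -α, -α, -α, -α, 0, 0, α],
      ![α, -α, 3 * α, -α, -α, -α, -α, 0, 0, α],
      ![α, -α, -α, sv * α, (starRingEnd ℂ) sv * α, α, α, 0, 0, α],
      ![α, -α, -α, (starRingEnd ℂ) sv * α, sv * α, α, α, 0, 0, α],
      ![α, -α, -α, α, α, (starRingEnd ℂ) sv * α, sv * α, 0, 0, α],
      ![α, -α, -α, α, α, sv * α, (starRingEnd ℂ) sv * α, 0, 0, α],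
      ![γ', 0, 0, 0, 0, 0, 0, -ε', δ, -γ'],
      ![γ', 0, 0, 0, 0, 0, 0, δ, -ε', -γ'],
      ![β, α, α, α, α, α, α, -γ', -γ', 1]]

lemma sum_univ_nine' {M : Type*} [AddCommMonoid M] (f : Fin 9 → M) :
    ∑ i, f i = f 0 + f 1 + f 2 + f 3 + f 4 + f 5 + f 6 + f 7 + f 8 := by
  rw [Fin.sum_univ_castSucc, Fin.sum_univ_eight]; rfl

lemma sum_univ_ten' {M : Type*} [AddCommMonoid M] (f : Fin 10 → M) :
    ∑ i, f i = f 0 + f 1 + f 2 + f 3 + f 4 + f 5 + f 6 + f 7 + f 8 + f 9 := by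
  rw [Fin.sum_univ_castSucc, sum_univ_nine']; rfl

lemma fin10cases (P : Fin 10 → Prop) (h0 : P 0) (h1 : P 1) (h2 : P 2) (h3 : P 3) (h4 : P 4)
    (h5 : P 5) (h6 : P 6) (h7 : P 7) (h8 : P 8) (h9 : P 9) : ∀ i, P i := by
  intro i
  fin_cases i
  exacts [h0, h1, h2, h3, h4, h5, h6, h7, h8, h9]

lemma Se00 : Srank10 0 0 = 1 := rfl
lemma Se01 : Srank10 0 1 = α := rfl
lemma Se02 : Srank10 0 2 = α := rfl
lemma Se03 : Srank10 0 3 = α := rfl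
lemma Se04 : Srank10 0 4 = α := rfl
lemma Se05 : Srank10 0 5 = α := rfl
lemma Se06 : Srank10 0 6 = α := rfl
lemma Se07 : Srank10 0 7 = γ' := rfl
lemma Se08 : Srank10 0 8 = γ' := rfl
lemma Se09 : Srank10 0 9 = β := rfl
lemma Se10 : Srank10 1 0 = α := rfl
lemma Se11 : Srank10 1 1 = 3 * α := rfl
lemma Se12 : Srank10 1 2 = -α := rfl
lemma Se13 : Srank10 1 3 = -α := rfl
lemma Se14 : Srank10 1 4 = -α := rfl
lemma Se15 : Srank10 1 5 = -α := rfl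
lemma Se16 : Srank10 1 6 = -α := rfl
lemma Se17 : Srank10 1 7 = 0 := rfl
lemma Se18 : Srank10 1 8 = 0 := rfl
lemma Se19 : Srank10 1 9 = α := rfl
lemma Se20 : Srank10 2 0 = α := rfl
lemma Se21 : Srank10 2 1 = -α := rfl
lemma Se22 : Srank10 2 2 = 3 * α := rfl
lemma Se23 : Srank10 2 3 = -α := rfl
lemma Se24 : Srank10 2 4 = -α := rfl
lemma Se25 : Srank10 2 5 = -α := rfl
lemma Se26 : Srank10 2 6 = -α := rfl
lemma Se27 : Srank10 2 7 = 0 := rfl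
lemma Se28 : Srank10 2 8 = 0 := rfl
lemma Se29 : Srank10 2 9 = α := rfl
lemma Se30 : Srank10 3 0 = α := rfl
lemma Se31 : Srank10 3 1 = -α := rfl
lemma Se32 : Srank10 3 2 = -α := rfl
lemma Se33 : Srank10 3 3 = sv * α := rfl
lemma Se34 : Srank10 3 4 = (starRingEnd ℂ) sv * α := rfl
lemma Se35 : Srank10 3 5 = α := rfl
lemma Se36 : Srank10 3 6 = α := rfl
lemma Se37 : Srank10 3 7 = 0 := rfl
lemma Se38 : Srank10 3 8 = 0 := rfl
lemma Se39 : Srank10 3 9 = α := rfl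
lemma Se40 : Srank10 4 0 = α := rfl
lemma Se41 : Srank10 4 1 = -α := rfl
lemma Se42 : Srank10 4 2 = -α := rfl
lemma Se43 : Srank10 4 3 = (starRingEnd ℂ) sv * α := rfl
lemma Se44 : Srank10 4 4 = sv * α := rfl
lemma Se45 : Srank10 4 5 = α := rfl
lemma Se46 : Srank10 4 6 = α := rfl
lemma Se47 : Srank10 4 7 = 0 := rfl
lemma Se48 : Srank10 4 8 = 0 := rfl
lemma Se49 : Srank10 4 9 = α := rfl
lemma Se50 : Srank10 5 0 = α := rfl
lemma Se51 : Srank10 5 1 = -α := rfl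
lemma Se52 : Srank10 5 2 = -α := rfl
lemma Se53 : Srank10 5 3 = α := rfl
lemma Se54 : Srank10 5 4 = α := rfl
lemma Se55 : Srank10 5 5 = (starRingEnd ℂ) sv * α := rfl
lemma Se56 : Srank10 5 6 = sv * α := rfl
lemma Se57 : Srank10 5 7 = 0 := rfl
lemma Se58 : Srank10 5 8 = 0 := rfl
lemma Se59 : Srank10 5 9 = α := rfl
lemma Se60 : Srank10 6 0 = α := rfl
lemma Se61 : Srank10 6 1 = -α := rfl
lemma Se62 : Srank10 6 2 = -α := rfl
lemma Se63 : Srank10 6 3 = α := rfl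
lemma Se64 : Srank10 6 4 = α := rfl
lemma Se65 : Srank10 6 5 = sv * α := rfl
lemma Se66 : Srank10 6 6 = (starRingEnd ℂ) sv * α := rfl
lemma Se67 : Srank10 6 7 = 0 := rfl
lemma Se68 : Srank10 6 8 = 0 := rfl
lemma Se69 : Srank10 6 9 = α := rfl
lemma Se70 : Srank10 7 0 = γ' := rfl
lemma Se71 : Srank10 7 1 = 0 := rfl
lemma Se72 : Srank10 7 2 = 0 := rfl
lemma Se73 : Srank10 7 3 = 0 := rfl
lemma Se74 : Srank10 7 4 = 0 := rfl
lemma Se75 : Srank10 7 5 = 0 := rfl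
lemma Se76 : Srank10 7 6 = 0 := rfl
lemma Se77 : Srank10 7 7 = -ε' := rfl
lemma Se78 : Srank10 7 8 = δ := rfl
lemma Se79 : Srank10 7 9 = -γ' := rfl
lemma Se80 : Srank10 8 0 = γ' := rfl
lemma Se81 : Srank10 8 1 = 0 := rfl
lemma Se82 : Srank10 8 2 = 0 := rfl
lemma Se83 : Srank10 8 3 = 0 := rfl
lemma Se84 : Srank10 8 4 = 0 := rfl
lemma Se85 : Srank10 8 5 = 0 := rfl
lemma Se86 : Srank10 8 6 = 0 := rfl
lemma Se87 : Srank10 8 7 = δ := rfl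
lemma Se88 : Srank10 8 8 = -ε' := rfl
lemma Se89 : Srank10 8 9 = -γ' := rfl
lemma Se90 : Srank10 9 0 = β := rfl
lemma Se91 : Srank10 9 1 = α := rfl
lemma Se92 : Srank10 9 2 = α := rfl
lemma Se93 : Srank10 9 3 = α := rfl
lemma Se94 : Srank10 9 4 = α := rfl
lemma Se95 : Srank10 9 5 = α := rfl
lemma Se96 : Srank10 9 6 = α := rfl
lemma Se97 : Srank10 9 7 = -γ' := rfl
lemma Se98 : Srank10 9 8 = -γ' := rfl
lemma Se99 : Srank10 9 9 = 1 := rfl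

set_option maxHeartbeats 2000000 in
theorem Srank10_unitary :
    Srank10 * Srank10.map (starRingEnd ℂ)
      = ((720 + 320 * Real.sqrt 5 : ℝ) : ℂ) • (1 : Matrix (Fin 10) (Fin 10) ℂ) := by
  have h2 : ((Real.sqrt 5 : ℝ) : ℂ)^2 = 5 := by
    rw [← Complex.ofReal_pow, Real.sq_sqrt (by norm_num : (0:ℝ) ≤ 5)]; norm_num
  have hr : Real.sqrt 5 ^ 2 = 5 := Real.sq_sqrt (by norm_num)
  rw [← Matrix.ext_iff]
  refine fin10cases _ ?_ ?_ ?_ ?_ ?_ ?_ ?_ ?_ ?_ ?_ <;>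
    refine fin10cases _ ?_ ?_ ?_ ?_ ?_ ?_ ?_ ?_ ?_ ?_
  all_goals rw [Matrix.mul_apply, sum_univ_ten']
  all_goals simp only [Matrix.map_apply, Matrix.smul_apply, Matrix.one_apply,
    smul_eq_mul, mul_one, mul_zero,
    Se00, Se01, Se02, Se03, Se04, Se05, Se06, Se07, Se08, Se09, Se10, Se11, Se12, Se13, Se14, Se15, Se16, Se17, Se18, Se19, Se20, Se21, Se22, Se23, Se24, Se25, Se26, Se27, Se28, Se29, Se30, Se31, Se32, Se33, Se34, Se35, Se36, Se37, Se38, Se39, Se40, Se41, Se42, Se43, Se44, Se45, Se46, Se47, Se48, Se49, Se50, Se51, Se52, Se53, Se54, Se55, Se56, Se57, Se58, Se59, Se60, Se61, Se62, Se63, Se64, Se65, Se66, Se67, Se68, Se69, Se70, Se71, Se72, Se73, Se74, Se75, Se76, Se77, Se78, Se79, Se80, Se81, Se82, Se83, Se84, Se85, Se86, Se87, Se88, Se89, Se90, Se91, Se92, Se93, Se94, Se95, Se96, Se97, Se98, Se99]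
  all_goals try rw [if_neg (by decide)]
  all_goals norm_num [α, β, δ, γ', ε', sv, Complex.conj_ofReal, Complex.ext_iff]
  all_goals try ring_nf
  all_goals try simp [h2, hr, Complex.I_sq]
  all_goals try ring_nf
  all_goals try norm_num [hr]

end
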